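/- arXiv:2010.14897 — 3 statements merged into one kernel-verified Lean document; each statement's English description precedes it below -/
import Mathlib

section
/- Let θ ∈ (0,1] and x ∈ D((-A)^θ). Then for every s > 0 the series A e^{sA} x := −∑_n α_n e^{-α_n s} ⟨x, e_n⟩ e_n converges in H, the map s ↦ A e^{sA} x is Bochner integrable on (0,t] for every t ≥ 0, and ∫₀^t (−A e^{sA} x) ds = x − e^{tA} x. -/
/-!
Every coefficient of the series satisfies `α e^{-α s} ≤ s^{θ-1} α^θ`, because
`(α s)^{1-θ} ≤ e^{α s}`. Hence `‖A e^{sA} x‖ ≤ s^{θ-1} ‖x‖_{(-A)^θ}`, which is integrable on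
`(0, t]` since `θ > 0`. The integral then commutes with every coordinate functional
`⟪e m, ·⟫`, and coordinatewise the identity is `∫₀^t α e^{-α s} ds = 1 - e^{-α t}`.
-/

open scoped RealInnerProductSpace
open MeasureTheory Set

namespace Real

lemma rpow_le_exp {u a : ℝ} (hu : 0 ≤ u) (ha : 0 ≤ a) (ha1 : a ≤ 1) : u ^ a ≤ exp u := by
  rcases le_total u 1 with hu1 | hu1
  · exact (rpow_le_one hu hu1 ha).trans (one_le_exp hu)
  · calc u ^ a ≤ u := rpow_le_self_of_one_le hu1 ha1
      _ ≤ u + 1 := by linarith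
      _ ≤ exp u := add_one_le_exp u

lemma mul_exp_neg_mul_le {θ s a : ℝ} (hθ0 : 0 ≤ θ) (hθ1 : θ ≤ 1) (hs : 0 < s) (ha : 0 < a) :
    a * exp (-a * s) ≤ s ^ (θ - 1) * a ^ θ := by
  have hexp : a ^ (1 - θ) * s ^ (1 - θ) ≤ exp (a * s) := by
    rw [← mul_rpow ha.le hs.le]
    exact rpow_le_exp (mul_pos ha hs).le (by linarith) (by linarith)
  have hsplit : a * exp (-a * s)
      = s ^ (θ - 1) * a ^ θ * (a ^ (1 - θ) * s ^ (1 - θ) * exp (-(a * s))) := by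
    have ha' : a = a ^ θ * a ^ (1 - θ) := by rw [← rpow_add ha]; norm_num
    have hs' : s ^ (θ - 1) * s ^ (1 - θ) = 1 := by rw [← rpow_add hs]; norm_num
    calc a * exp (-a * s)
        = a ^ θ * a ^ (1 - θ) * (s ^ (θ - 1) * s ^ (1 - θ)) * exp (-(a * s)) := by
          rw [← ha', hs', neg_mul, mul_one]
      _ = _ := by ring
  have hle_one : a ^ (1 - θ) * s ^ (1 - θ) * exp (-(a * s)) ≤ 1 := by
    rw [exp_neg, ← div_eq_mul_inv]
    exact div_le_one_of_le₀ hexp (exp_pos _).le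
  rw [hsplit]
  exact mul_le_of_le_one_right (by positivity) hle_one

lemma sq_mul_exp_neg_mul_mul_le {θ s a : ℝ} (hθ0 : 0 ≤ θ) (hθ1 : θ ≤ 1) (hs : 0 < s)
    (ha : 0 < a) (c : ℝ) :
    (a * exp (-a * s) * c) ^ 2 ≤ (s ^ (θ - 1)) ^ 2 * (a ^ (2 * θ) * c ^ 2) := by
  have hbound := pow_le_pow_left₀ (by positivity) (mul_exp_neg_mul_le hθ0 hθ1 hs ha) 2
  rw [mul_comm 2 θ, rpow_mul ha.le, rpow_two]
  calc (a * exp (-a * s) * c) ^ 2 = (a * exp (-a * s)) ^ 2 * c ^ 2 := by ring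
    _ ≤ (s ^ (θ - 1) * a ^ θ) ^ 2 * c ^ 2 := by gcongr
    _ = _ := by ring

lemma integral_mul_exp_neg_mul (a t : ℝ) :
    ∫ s in (0 : ℝ)..t, a * exp (-a * s) = 1 - exp (-a * t) := by
  have hderiv : ∀ s, HasDerivAt (fun u => -exp (-a * u)) (a * exp (-a * s)) s := fun s => by
    have h := (((hasDerivAt_id' s).const_mul (-a)).exp).neg
    rw [show a * exp (-a * s) = -(exp (-a * s) * (-a * 1)) by ring]
    exact h
  rw [intervalIntegral.integral_eq_sub_of_hasDerivAt (fun s _ => hderiv s)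
    ((by fun_prop : Continuous fun s => a * exp (-a * s)).intervalIntegrable 0 t)]
  simp only [mul_zero, exp_zero]
  ring

end Real

namespace HilbertBasis

variable {ι H : Type*} [NormedAddCommGroup H] [InnerProductSpace ℝ H] (e : HilbertBasis ι ℝ H)

lemma ext_inner_left {y z : H} (h : ∀ i, ⟪e i, y⟫ = ⟪e i, z⟫) : y = z :=
  e.repr.injective <| lp.ext <| funext fun i => by
    simp only [e.repr_apply_apply, h]

lemma inner_left_eq_of_hasSum [DecidableEq ι] {f : ι → ℝ} {y : H}
    (h : HasSum (fun i => f i • e i) y) (i : ι) : ⟪e i, y⟫ = f i := by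
  have hinner := (innerSL ℝ (e i)).hasSum h
  simp only [innerSL_apply_apply, real_inner_smul_right,
    orthonormal_iff_ite.mp e.orthonormal, mul_ite, mul_one, mul_zero] at hinner
  rw [hinner.unique (hasSum_single i fun j hj => if_neg hj.symm), if_pos rfl]

lemma hasSum_sq_of_hasSum {f : ι → ℝ} {y : H} (h : HasSum (fun i => f i • e i) y) :
    HasSum (fun i => f i ^ 2) (‖y‖ ^ 2) := by
  classical
  have hparseval := e.hasSum_inner_mul_inner y y
  simp only [real_inner_comm _ y, e.inner_left_eq_of_hasSum h, ← sq,
    real_inner_self_eq_norm_sq] at hparseval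
  exact hparseval

lemma summable_smul_of_summable_sq [CompleteSpace H] {f : ι → ℝ}
    (hf : Summable fun i => f i ^ 2) : Summable fun i => f i • e i := by
  have h := (e.orthonormal.orthogonalFamily.summable_iff_norm_sq_summable f).mpr
    (by simpa only [Real.norm_eq_abs, sq_abs] using hf)
  simpa only [LinearIsometry.toSpanSingleton_apply] using h

lemma norm_tsum_smul_le [CompleteSpace H] {f g : ι → ℝ} {C : ℝ} (hC : 0 ≤ C)
    (hg : Summable g) (hfg : ∀ i, f i ^ 2 ≤ C ^ 2 * g i) :
    ‖∑' i, f i • e i‖ ≤ C * √(∑' i, g i) := by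
  have hf : Summable fun i => f i ^ 2 :=
    (hg.mul_left _).of_nonneg_of_le (fun i => sq_nonneg _) hfg
  have hsq : ‖∑' i, f i • e i‖ ^ 2 ≤ C ^ 2 * ∑' i, g i := by
    rw [← (e.hasSum_sq_of_hasSum (e.summable_smul_of_summable_sq hf).hasSum).tsum_eq,
      ← tsum_mul_left]
    exact hf.tsum_le_tsum hfg (hg.mul_left _)
  calc ‖∑' i, f i • e i‖ = √(‖∑' i, f i • e i‖ ^ 2) := (Real.sqrt_sq (norm_nonneg _)).symm
    _ ≤ √(C ^ 2 * ∑' i, g i) := Real.sqrt_le_sqrt hsq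
    _ = C * √(∑' i, g i) := by rw [Real.sqrt_mul (sq_nonneg _), Real.sqrt_sq hC]

end HilbertBasis

section DiagonalSemigroup

variable {H : Type*} [NormedAddCommGroup H] [InnerProductSpace ℝ H] [CompleteSpace H]
  (e : HilbertBasis ℕ ℝ H) (α : ℕ → ℝ) (x : H)

/-- `-A e^{sA} x`, for the diagonal operator `A e_n = -α_n e_n`. -/
noncomputable def negGenSemigroup (s : ℝ) : H :=
  ∑' n, (α n * Real.exp (-(α n) * s) * ⟪x, e n⟫) • e n

variable {e α x} {θ : ℝ} (hpos : ∀ n, 0 < α n) (hθ0 : 0 ≤ θ) (hθ1 : θ ≤ 1)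
  (hx : Summable fun n => α n ^ (2 * θ) * ⟪x, e n⟫ ^ 2)
include hpos hθ0 hθ1 hx

lemma hasSum_negGenSemigroup {s : ℝ} (hs : 0 < s) :
    HasSum (fun n => (α n * Real.exp (-(α n) * s) * ⟪x, e n⟫) • e n)
      (negGenSemigroup e α x s) :=
  (e.summable_smul_of_summable_sq <| (hx.mul_left _).of_nonneg_of_le (fun _ => sq_nonneg _)
    fun n => Real.sq_mul_exp_neg_mul_mul_le hθ0 hθ1 hs (hpos n) _).hasSum

lemma norm_negGenSemigroup_le {s : ℝ} (hs : 0 < s) :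
    ‖negGenSemigroup e α x s‖ ≤ s ^ (θ - 1) * √(∑' n, α n ^ (2 * θ) * ⟪x, e n⟫ ^ 2) :=
  e.norm_tsum_smul_le (Real.rpow_nonneg hs.le _) hx
    fun n => Real.sq_mul_exp_neg_mul_mul_le hθ0 hθ1 hs (hpos n) _

lemma aestronglyMeasurable_negGenSemigroup :
    AEStronglyMeasurable (negGenSemigroup e α x) (volume.restrict (Ioi 0)) := by
  refine aestronglyMeasurable_of_tendsto_ae Filter.atTop
    (f := fun N s => ∑ n ∈ Finset.range N, (α n * Real.exp (-(α n) * s) * ⟪x, e n⟫) • e n)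
    (fun N => by fun_prop) ?_
  filter_upwards [ae_restrict_mem measurableSet_Ioi] with s hs
  exact (hasSum_negGenSemigroup hpos hθ0 hθ1 hx hs).tendsto_sum_nat

lemma integrableOn_negGenSemigroup (hθ : 0 < θ) (t : ℝ) :
    IntegrableOn (negGenSemigroup e α x) (Ioc 0 t) := by
  have hmajorant : IntegrableOn
      (fun s => s ^ (θ - 1) * √(∑' n, α n ^ (2 * θ) * ⟪x, e n⟫ ^ 2)) (Ioc 0 t) :=
    ((intervalIntegral.intervalIntegrable_rpow' (by linarith)).mul_const _).def'.mono_set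
      Ioc_subset_uIoc
  refine hmajorant.mono'
    ((aestronglyMeasurable_negGenSemigroup hpos hθ0 hθ1 hx).mono_set Ioc_subset_Ioi_self) ?_
  filter_upwards [ae_restrict_mem measurableSet_Ioc] with s hs
  exact norm_negGenSemigroup_le hpos hθ0 hθ1 hx hs.1

lemma inner_integral_negGenSemigroup (hθ : 0 < θ) {t : ℝ} (ht : 0 ≤ t) (m : ℕ) :
    ⟪e m, ∫ s in Ioc 0 t, negGenSemigroup e α x s⟫ = (1 - Real.exp (-(α m) * t)) * ⟪x, e m⟫ := by
  classical
  rw [← integral_inner (integrableOn_negGenSemigroup hpos hθ0 hθ1 hx hθ t),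
    setIntegral_congr_fun measurableSet_Ioc fun s hs =>
      e.inner_left_eq_of_hasSum (hasSum_negGenSemigroup hpos hθ0 hθ1 hx hs.1) m,
    ← intervalIntegral.integral_of_le ht, intervalIntegral.integral_mul_const,
    Real.integral_mul_exp_neg_mul]

end DiagonalSemigroup

theorem stmt11_general {H : Type*} [NormedAddCommGroup H] [InnerProductSpace ℝ H]
    [CompleteSpace H] (e : HilbertBasis ℕ ℝ H) (α : ℕ → ℝ)
    (hpos : ∀ n, 0 < α n)
    (S : ℝ → H → H)
    (hS : ∀ t : ℝ, 0 ≤ t → ∀ x : H,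
      HasSum (fun n => (Real.exp (-(α n) * t) * ⟪x, e n⟫) • (e n : H)) (S t x))
    (θ : ℝ) (hθ0 : 0 < θ) (hθ1 : θ ≤ 1) (x : H)
    (hx : Summable fun n => α n ^ (2 * θ) * ⟪x, e n⟫ ^ 2) :
    (∀ s : ℝ, 0 < s →
      Summable fun n => (α n * Real.exp (-(α n) * s) * ⟪x, e n⟫) • (e n : H)) ∧
    (∀ t : ℝ, 0 ≤ t →
      MeasureTheory.IntegrableOn
        (fun s => -(∑' n, (α n * Real.exp (-(α n) * s) * ⟪x, e n⟫) • (e n : H)))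
        (Set.Ioc (0:ℝ) t)) ∧
    (∀ t : ℝ, 0 ≤ t →
      (∫ s in Set.Ioc (0:ℝ) t,
          ∑' n, (α n * Real.exp (-(α n) * s) * ⟪x, e n⟫) • (e n : H))
        = x - S t x) := by
  classical
  refine ⟨fun s hs => (hasSum_negGenSemigroup hpos hθ0.le hθ1 hx hs).summable,
    fun t _ => (integrableOn_negGenSemigroup hpos hθ0.le hθ1 hx hθ0 t).neg, fun t ht => ?_⟩
  change ∫ s in Ioc 0 t, negGenSemigroup e α x s = x - S t x
  refine e.ext_inner_left fun m => ?_
  rw [inner_integral_negGenSemigroup hpos hθ0.le hθ1 hx hθ0 ht, inner_sub_right,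
    e.inner_left_eq_of_hasSum (hS t ht x) m, real_inner_comm]
  ring

/-- Let `θ ∈ (0,1]` and `x ∈ D((-A)^θ)`.  Then for every `s > 0`
the series `A e^{sA} x := −∑_n α_n e^{-α_n s} ⟨x, e_n⟩ e_n` converges in `H`,
the map `s ↦ A e^{sA} x` is Bochner integrable on `(0,t]` for every `t ≥ 0`,
and `∫₀^t (−A e^{sA} x) ds = x − e^{tA} x`.
Here `S t x = e^{tA} x` is characterized by `hS`. -/
theorem stmt11 {H : Type*} [NormedAddCommGroup H] [InnerProductSpace ℝ H]
    [CompleteSpace H] (e : HilbertBasis ℕ ℝ H) (α : ℕ → ℝ)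
    (hmono : Monotone α) (hpos : ∀ n, 0 < α n)
    (S : ℝ → H → H)
    (hS : ∀ t : ℝ, 0 ≤ t → ∀ x : H,
      HasSum (fun n => (Real.exp (-(α n) * t) * ⟪x, e n⟫) • (e n : H)) (S t x))
    (θ : ℝ) (hθ0 : 0 < θ) (hθ1 : θ ≤ 1) (x : H)
    (hx : Summable fun n => α n ^ (2 * θ) * ⟪x, e n⟫ ^ 2) :
    (∀ s : ℝ, 0 < s →
      Summable fun n => (α n * Real.exp (-(α n) * s) * ⟪x, e n⟫) • (e n : H)) ∧
    (∀ t : ℝ, 0 ≤ t →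
      MeasureTheory.IntegrableOn
        (fun s => -(∑' n, (α n * Real.exp (-(α n) * s) * ⟪x, e n⟫) • (e n : H)))
        (Set.Ioc (0:ℝ) t)) ∧
    (∀ t : ℝ, 0 ≤ t →
      (∫ s in Set.Ioc (0:ℝ) t,
          ∑' n, (α n * Real.exp (-(α n) * s) * ⟪x, e n⟫) • (e n : H))
        = x - S t x) :=
  stmt11_general e α hpos S hS θ hθ0 hθ1 x hx
end

section
/- Let γ ∈ [0,1), t > 0, and let f : [0,t] → H be strongly measurable and bounded. Then the Bochner integral g := ∫₀^t e^{(t−s)A} f(s) ds exists, g ∈ D((-A)^γ), and ‖(-A)^γ g‖ ≤ C_γ ∫₀^t (t−s)^{−γ} e^{-α₁ (t−s)/2} ‖f(s)‖ ds, where C_γ is any constant such that ‖(-A)^γ e^{rA} y‖ ≤ C_γ r^{−γ} e^{-α₁ r/2} ‖y‖ for all r > 0 and y ∈ H. -/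
open scoped RealInnerProductSpace

open MeasureTheory

private lemma coeff_of_hasSum {H : Type*} [NormedAddCommGroup H] [InnerProductSpace ℝ H]
    (e : HilbertBasis ℕ ℝ H) {c : ℕ → ℝ} {x : H}
    (h : HasSum (fun n => c n • (e n : H)) x) (n : ℕ) : ⟪(e n : H), x⟫ = c n := by
  have h2 := (innerSL ℝ (e n : H)).hasSum h
  have h3 : (fun m => (innerSL ℝ (e n : H)) (c m • (e m : H)))
      = fun m => if m = n then c n else 0 := by
    funext m
    simp only [innerSL_apply_apply, real_inner_smul_right]
    rw [orthonormal_iff_ite.mp e.orthonormal]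
    by_cases hnm : m = n
    · subst hnm; simp
    · rw [if_neg (fun h => hnm h.symm), if_neg hnm, mul_zero]
  rw [h3] at h2
  simpa using h2.unique (hasSum_ite_eq n (c n))

private lemma hasSum_inner_sq {H : Type*} [NormedAddCommGroup H] [InnerProductSpace ℝ H]
    (e : HilbertBasis ℕ ℝ H) (x : H) :
    HasSum (fun n => ⟪x, (e n : H)⟫ ^ 2) (‖x‖ ^ 2) := by
  have h := e.hasSum_inner_mul_inner x x
  have h2 : (fun n => ⟪x, (e n : H)⟫ * ⟪(e n : H), x⟫) = fun n => ⟪x, (e n : H)⟫ ^ 2 := by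
    funext n; rw [real_inner_comm (e n : H) x]; ring
  rwa [h2, real_inner_self_eq_norm_sq] at h

private lemma summable_smul_basis {H : Type*} [NormedAddCommGroup H] [InnerProductSpace ℝ H]
    [CompleteSpace H] (e : HilbertBasis ℕ ℝ H) {c : ℕ → ℝ}
    (hc : Summable fun n => (c n) ^ 2) :
    Summable (fun n => c n • (e n : H)) := by
  have hm : Memℓp c 2 := by
    apply memℓp_gen
    have : (fun i => ‖c i‖ ^ (2 : ENNReal).toReal) = fun i => (c i) ^ 2 := by
      funext i
      rw [ENNReal.toReal_ofNat, Real.rpow_two]; rw [Real.norm_eq_abs, sq_abs]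
    rwa [this]
  exact (e.hasSum_repr_symm ⟨c, hm⟩).summable

private lemma key_bound {γ x r : ℝ} (hγ0 : 0 ≤ γ) (hγ1 : γ < 1) (hx : 0 ≤ x) (hr : 0 < r) :
    x ^ (2 * γ) * Real.exp (-(2 * x) * r) ≤ 1 + 1 / r ^ 2 := by
  have hE0 : 0 < Real.exp (-(2 * x) * r) := Real.exp_pos _
  have hE1 : Real.exp (-(2 * x) * r) ≤ 1 := by
    rw [Real.exp_le_one_iff]; nlinarith
  have hxr : x * r ≤ Real.exp (x * r) := by
    have := Real.add_one_le_exp (x * r); linarith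
  have hsq : (x * r) ^ 2 ≤ Real.exp (x * r) ^ 2 :=
    pow_le_pow_left₀ (by positivity) hxr 2
  have hexp2 : Real.exp (x * r) ^ 2 = Real.exp ((2 * x) * r) := by
    rw [sq, ← Real.exp_add]; ring_nf
  have hx2 : x ^ 2 * Real.exp (-(2 * x) * r) ≤ 1 / r ^ 2 := by
    rw [neg_mul, Real.exp_neg, ← div_eq_mul_inv]
    rw [div_le_div_iff₀ (Real.exp_pos _) (by positivity)]
    nlinarith [hsq, hexp2]
  have hrpow : x ^ (2 * γ) ≤ 1 + x ^ 2 := by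
    rcases le_total x 1 with h | h
    · have := Real.rpow_le_one (z := 2 * γ) hx h (by positivity)
      nlinarith [sq_nonneg x]
    · have h2 : x ^ (2 * γ) ≤ x ^ (2 : ℝ) :=
        Real.rpow_le_rpow_of_exponent_le h (by linarith)
      rw [Real.rpow_two] at h2; linarith
  calc x ^ (2 * γ) * Real.exp (-(2 * x) * r)
      ≤ (1 + x ^ 2) * Real.exp (-(2 * x) * r) :=
        mul_le_mul_of_nonneg_right hrpow hE0.le
    _ = Real.exp (-(2 * x) * r) + x ^ 2 * Real.exp (-(2 * x) * r) := by ring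
    _ ≤ 1 + 1 / r ^ 2 := add_le_add hE1 hx2

private lemma sq_coeff {x r w γ : ℝ} (hx : 0 < x) :
    (x ^ γ * Real.exp (-x * r) * w) ^ 2 = x ^ (2 * γ) * Real.exp (-(2 * x) * r) * w ^ 2 := by
  have h1 : x ^ (2 * γ) = x ^ γ * x ^ γ := by
    rw [two_mul, Real.rpow_add hx]
  have h2 : Real.exp (-(2 * x) * r) = Real.exp (-x * r) * Real.exp (-x * r) := by
    rw [← Real.exp_add]; ring_nf
  rw [h1, h2]; ring

/-- Let `γ ∈ [0,1)`, `t > 0`, and let `f : [0,t] → H` be strongly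
measurable and bounded.  Then the Bochner integral `g := ∫₀^t e^{(t−s)A} f(s) ds`
exists, `g ∈ D((-A)^γ)`, and
`‖(-A)^γ g‖ ≤ C_γ ∫₀^t (t−s)^{−γ} e^{-α₁ (t−s)/2} ‖f(s)‖ ds`,
where `C_γ` is any constant such that
`‖(-A)^γ e^{rA} y‖ ≤ C_γ r^{−γ} e^{-α₁ r/2} ‖y‖` for all `r > 0`, `y ∈ H`.
Here `S r x = e^{rA} x` is characterized by `hS`, and the `(-A)^γ`-norm of an
element `z ∈ D((-A)^γ)` is `√(∑_n α_n^{2γ} ⟨z, e_n⟩²)`. -/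
theorem stmt13 {H : Type*} [NormedAddCommGroup H] [InnerProductSpace ℝ H]
    [CompleteSpace H] (e : HilbertBasis ℕ ℝ H) (α : ℕ → ℝ)
    (hmono : Monotone α) (hpos : ∀ n, 0 < α n)
    (S : ℝ → H → H)
    (hS : ∀ r : ℝ, 0 ≤ r → ∀ x : H,
      HasSum (fun n => (Real.exp (-(α n) * r) * ⟪x, e n⟫) • (e n : H)) (S r x))
    (γ : ℝ) (hγ0 : 0 ≤ γ) (hγ1 : γ < 1) (t : ℝ) (ht : 0 < t)
    (f : ℝ → H)
    (hf : MeasureTheory.AEStronglyMeasurable f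
      (MeasureTheory.volume.restrict (Set.Icc (0:ℝ) t)))
    (M : ℝ) (hM : ∀ s ∈ Set.Icc (0:ℝ) t, ‖f s‖ ≤ M)
    (C : ℝ)
    (hC : ∀ r : ℝ, 0 < r → ∀ y : H,
      Real.sqrt (∑' n, α n ^ (2 * γ) * Real.exp (-(2 * α n) * r) * ⟪y, e n⟫ ^ 2)
        ≤ C * r ^ (-γ) * Real.exp (-(α 0) * r / 2) * ‖y‖) :
    MeasureTheory.IntegrableOn (fun s => S (t - s) (f s)) (Set.Icc (0:ℝ) t) ∧
    Summable (fun n =>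
      α n ^ (2 * γ) * ⟪∫ s in Set.Icc (0:ℝ) t, S (t - s) (f s), e n⟫ ^ 2) ∧
    Real.sqrt (∑' n,
        α n ^ (2 * γ) * ⟪∫ s in Set.Icc (0:ℝ) t, S (t - s) (f s), e n⟫ ^ 2)
      ≤ C * ∫ s in Set.Icc (0:ℝ) t,
          (t - s) ^ (-γ) * Real.exp (-(α 0) * (t - s) / 2) * ‖f s‖ := by
  classical
  set μ := MeasureTheory.volume.restrict (Set.Icc (0:ℝ) t) with hμdef
  have hM0 : 0 ≤ M := le_trans (norm_nonneg (f 0)) (hM 0 ⟨le_refl 0, ht.le⟩)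
  -- coefficients of S
  have hScoeff : ∀ r : ℝ, 0 ≤ r → ∀ x : H, ∀ n,
      ⟪(e n : H), S r x⟫ = Real.exp (-(α n) * r) * ⟪x, e n⟫ :=
    fun r hr x n => coeff_of_hasSum e (hS r hr x) n
  -- contraction property
  have hnormS : ∀ r : ℝ, 0 ≤ r → ∀ x : H, ‖S r x‖ ≤ ‖x‖ := by
    intro r hr x
    have h1 := hasSum_inner_sq e (S r x)
    have h2 := hasSum_inner_sq e x
    have hle : ‖S r x‖ ^ 2 ≤ ‖x‖ ^ 2 := by
      rw [← h1.tsum_eq, ← h2.tsum_eq]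
      refine Summable.tsum_le_tsum (fun n => ?_) h1.summable h2.summable
      rw [real_inner_comm, hScoeff r hr x n]
      have he : Real.exp (-(α n) * r) ≤ 1 := by
        rw [Real.exp_le_one_iff]
        nlinarith [(hpos n).le]
      rw [mul_pow]
      have hE2 : Real.exp (-(α n) * r) ^ 2 ≤ 1 :=
        pow_le_one₀ (Real.exp_pos _).le he
      exact mul_le_of_le_one_left (sq_nonneg _) hE2
    nlinarith [norm_nonneg (S r x), norm_nonneg x]
  -- C is positive
  have hC0 : 0 < C := by
    have h := hC 1 one_pos (e 0)
    have hval : ∀ n : ℕ, α n ^ (2 * γ) * Real.exp (-(2 * α n) * 1) * ⟪(e 0 : H), e n⟫ ^ 2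
        = if n = 0 then α 0 ^ (2 * γ) * Real.exp (-(2 * α 0) * 1) else 0 := by
      intro n
      rw [real_inner_comm, orthonormal_iff_ite.mp e.orthonormal]
      by_cases h0 : n = 0
      · subst h0; simp
      · simp [h0]
    have htsum : (∑' n, α n ^ (2 * γ) * Real.exp (-(2 * α n) * 1) * ⟪(e 0 : H), e n⟫ ^ 2)
        = α 0 ^ (2 * γ) * Real.exp (-(2 * α 0) * 1) := by
      rw [tsum_congr hval]; exact tsum_ite_eq 0 _
    have h' : Real.sqrt (α 0 ^ (2 * γ) * Real.exp (-(2 * α 0) * 1))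
        ≤ C * 1 * Real.exp (-(α 0) * 1 / 2) * 1 := by
      have hee : ∀ n : ℕ, ⟪(e 0 : H), e n⟫ = ⟪e 0, e n⟫ := fun _ => rfl
      calc Real.sqrt (α 0 ^ (2 * γ) * Real.exp (-(2 * α 0) * 1))
          = Real.sqrt (∑' n, α n ^ (2 * γ) * Real.exp (-(2 * α n) * 1) * ⟪(e 0 : H), e n⟫ ^ 2) := by
            rw [htsum]
        _ ≤ C * (1 : ℝ) ^ (-γ) * Real.exp (-(α 0) * 1 / 2) * ‖(e 0 : H)‖ := h
        _ = C * 1 * Real.exp (-(α 0) * 1 / 2) * 1 := by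
            rw [Real.one_rpow, e.orthonormal.1 0]
    have hs : 0 < Real.sqrt (α 0 ^ (2 * γ) * Real.exp (-(2 * α 0) * 1)) := by
      apply Real.sqrt_pos.mpr
      have := hpos 0
      positivity
    nlinarith [Real.exp_pos (-(α 0) * 1 / 2)]
  -- the coefficient functions and the auxiliary function u
  set c : ℕ → ℝ → ℝ := fun n s => α n ^ γ * Real.exp (-(α n) * (t - s)) * ⟪f s, e n⟫ with hcdef
  set u : ℝ → H := fun s => ∑' n, c n s • (e n : H) with hudef
  -- a.e. in Ico 0 t
  have hae_lt : ∀ᵐ s ∂μ, s ∈ Set.Ico (0:ℝ) t := by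
    have h1 : ∀ᵐ s ∂μ, s ∈ Set.Icc (0:ℝ) t := ae_restrict_mem measurableSet_Icc
    have h2 : ∀ᵐ s ∂μ, s ≠ t := by
      refine ae_restrict_of_ae ?_
      have hset : {s : ℝ | ¬ s ≠ t} = {t} := by ext s; simp
      rw [MeasureTheory.ae_iff, hset]
      exact Real.volume_singleton
    filter_upwards [h1, h2] with s hs hs2
    exact ⟨hs.1, lt_of_le_of_ne hs.2 hs2⟩
  -- summability of coefficient squares
  have hcsum : ∀ s ∈ Set.Ico (0:ℝ) t, Summable (fun n => (c n s) ^ 2) := by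
    intro s hs
    have hr : 0 < t - s := sub_pos.mpr hs.2
    refine Summable.of_nonneg_of_le (fun n => sq_nonneg _) (fun n => ?_)
      (((hasSum_inner_sq e (f s)).summable).mul_left (1 + 1 / (t - s) ^ 2))
    rw [hcdef]
    simp only
    rw [sq_coeff (hpos n)]
    exact mul_le_mul_of_nonneg_right (key_bound hγ0 hγ1 (hpos n).le hr) (sq_nonneg _)
  have hu_hasSum : ∀ s ∈ Set.Ico (0:ℝ) t, HasSum (fun n => c n s • (e n : H)) (u s) :=
    fun s hs => (summable_smul_basis e (hcsum s hs)).hasSum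
  have hu_coeff : ∀ s ∈ Set.Ico (0:ℝ) t, ∀ n, ⟪(e n : H), u s⟫ = c n s :=
    fun s hs n => coeff_of_hasSum e (hu_hasSum s hs) n
  have hu_normsq : ∀ s ∈ Set.Ico (0:ℝ) t,
      ‖u s‖ ^ 2 = ∑' n, α n ^ (2 * γ) * Real.exp (-(2 * α n) * (t - s)) * ⟪f s, e n⟫ ^ 2 := by
    intro s hs
    rw [← (hasSum_inner_sq e (u s)).tsum_eq]
    refine tsum_congr fun n => ?_
    rw [real_inner_comm, hu_coeff s hs n, hcdef]
    simp only
    rw [sq_coeff (hpos n)]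
  have hu_norm_le : ∀ s ∈ Set.Ico (0:ℝ) t,
      ‖u s‖ ≤ C * (t - s) ^ (-γ) * Real.exp (-(α 0) * (t - s) / 2) * ‖f s‖ := by
    intro s hs
    have hr : 0 < t - s := sub_pos.mpr hs.2
    calc ‖u s‖ = Real.sqrt (‖u s‖ ^ 2) := (Real.sqrt_sq (norm_nonneg _)).symm
      _ = Real.sqrt (∑' n, α n ^ (2 * γ) * Real.exp (-(2 * α n) * (t - s)) * ⟪f s, e n⟫ ^ 2) := by
          rw [hu_normsq s hs]
      _ ≤ C * (t - s) ^ (-γ) * Real.exp (-(α 0) * (t - s) / 2) * ‖f s‖ := hC (t - s) hr (f s)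
  -- measurability of coefficient functions
  have hc_meas : ∀ n : ℕ, AEStronglyMeasurable (fun s => c n s) μ := by
    intro n
    have h1 : AEStronglyMeasurable (fun s => ⟪f s, (e n : H)⟫) μ :=
      AEStronglyMeasurable.inner hf aestronglyMeasurable_const
    have h2 : Continuous (fun s : ℝ => α n ^ γ * Real.exp (-(α n) * (t - s))) := by
      fun_prop
    exact h2.aestronglyMeasurable.mul h1
  -- measurability of u
  have hu_meas : AEStronglyMeasurable u μ := by
    refine aestronglyMeasurable_of_tendsto_ae (f := fun N s => ∑ n ∈ Finset.range N,
      c n s • (e n : H)) Filter.atTop (fun N => ?_) ?_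
    · exact Finset.aestronglyMeasurable_fun_sum _ fun n _ => (hc_meas n).smul_const _
    · filter_upwards [hae_lt] with s hs
      exact (hu_hasSum s hs).tendsto_sum_nat
  -- measurability of the integrand
  have hg_meas : AEStronglyMeasurable (fun s => S (t - s) (f s)) μ := by
    refine aestronglyMeasurable_of_tendsto_ae (f := fun N s => ∑ n ∈ Finset.range N,
      (Real.exp (-(α n) * (t - s)) * ⟪f s, e n⟫) • (e n : H)) Filter.atTop (fun N => ?_) ?_
    · refine Finset.aestronglyMeasurable_fun_sum _ fun n _ => AEStronglyMeasurable.smul_const ?_ _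
      have h1 : AEStronglyMeasurable (fun s => ⟪f s, (e n : H)⟫) μ :=
        AEStronglyMeasurable.inner hf aestronglyMeasurable_const
      have h2 : Continuous (fun s : ℝ => Real.exp (-(α n) * (t - s))) := by fun_prop
      exact h2.aestronglyMeasurable.mul h1
    · filter_upwards [ae_restrict_mem measurableSet_Icc] with s hs
      exact (hS (t - s) (sub_nonneg.mpr hs.2) (f s)).tendsto_sum_nat
  -- integrability of the integrand
  have hIcc_fin : MeasureTheory.volume (Set.Icc (0:ℝ) t) < ⊤ := by
    rw [Real.volume_Icc]; exact ENNReal.ofReal_lt_top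
  have h1 : MeasureTheory.IntegrableOn (fun s => S (t - s) (f s)) (Set.Icc (0:ℝ) t) := by
    refine MeasureTheory.Integrable.mono' (g := fun _ => M)
      (MeasureTheory.integrableOn_const hIcc_fin.ne) hg_meas ?_
    filter_upwards [ae_restrict_mem measurableSet_Icc] with s hs
    exact (hnormS (t - s) (sub_nonneg.mpr hs.2) (f s)).trans (hM s hs)
  -- integrability of (t-s)^(-γ)
  have h_rpow_int : MeasureTheory.IntegrableOn (fun s => (t - s) ^ (-γ)) (Set.Icc (0:ℝ) t) := by
    have h0 : IntervalIntegrable (fun x : ℝ => x ^ (-γ)) MeasureTheory.volume 0 t :=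
      intervalIntegral.intervalIntegrable_rpow' (by linarith)
    have h2 := (h0.comp_sub_left t).symm
    rw [sub_self, sub_zero] at h2
    exact (intervalIntegrable_iff_integrableOn_Icc_of_le ht.le).mp h2
  -- integrability of the RHS integrand
  have hφ_meas : AEStronglyMeasurable
      (fun s => (t - s) ^ (-γ) * Real.exp (-(α 0) * (t - s) / 2) * ‖f s‖) μ := by
    have hm1 : Measurable (fun s : ℝ => (t - s) ^ (-γ)) :=
      (measurable_const.sub measurable_id).pow measurable_const
    have hm2 : Continuous (fun s : ℝ => Real.exp (-(α 0) * (t - s) / 2)) := by fun_prop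
    exact ((hm1.aestronglyMeasurable.mul hm2.aestronglyMeasurable).mul hf.norm)
  have hφ_int : MeasureTheory.IntegrableOn
      (fun s => (t - s) ^ (-γ) * Real.exp (-(α 0) * (t - s) / 2) * ‖f s‖)
      (Set.Icc (0:ℝ) t) := by
    refine MeasureTheory.Integrable.mono' (g := fun s => M * (t - s) ^ (-γ))
      (h_rpow_int.const_mul M) hφ_meas ?_
    filter_upwards [ae_restrict_mem measurableSet_Icc] with s hs
    have hr0 : 0 ≤ t - s := sub_nonneg.mpr hs.2
    have ha : 0 ≤ (t - s) ^ (-γ) := Real.rpow_nonneg hr0 _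
    have hE : Real.exp (-(α 0) * (t - s) / 2) ≤ 1 := by
      rw [Real.exp_le_one_iff]
      nlinarith [(hpos 0).le]
    have hE0 : 0 < Real.exp (-(α 0) * (t - s) / 2) := Real.exp_pos _
    have hfs : ‖f s‖ ≤ M := hM s hs
    rw [Real.norm_eq_abs, abs_of_nonneg (by positivity)]
    calc (t - s) ^ (-γ) * Real.exp (-(α 0) * (t - s) / 2) * ‖f s‖
        ≤ (t - s) ^ (-γ) * 1 * M := by
          apply mul_le_mul (mul_le_mul_of_nonneg_left hE ha) hfs (norm_nonneg _)
          positivity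
      _ = M * (t - s) ^ (-γ) := by ring
  -- integrability of u
  have hu_int : MeasureTheory.IntegrableOn u (Set.Icc (0:ℝ) t) := by
    refine MeasureTheory.Integrable.mono' (g := fun s => (C * M) * (t - s) ^ (-γ))
      (h_rpow_int.const_mul (C * M)) hu_meas ?_
    filter_upwards [hae_lt] with s hs
    have hr0 : 0 ≤ t - s := sub_nonneg.mpr hs.2.le
    have ha : 0 ≤ (t - s) ^ (-γ) := Real.rpow_nonneg hr0 _
    have hE : Real.exp (-(α 0) * (t - s) / 2) ≤ 1 := by
      rw [Real.exp_le_one_iff]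
      nlinarith [(hpos 0).le]
    have hfs : ‖f s‖ ≤ M := hM s ⟨hs.1, hs.2.le⟩
    calc ‖u s‖ ≤ C * (t - s) ^ (-γ) * Real.exp (-(α 0) * (t - s) / 2) * ‖f s‖ :=
        hu_norm_le s hs
      _ ≤ C * (t - s) ^ (-γ) * 1 * M := by
          apply mul_le_mul (mul_le_mul_of_nonneg_left hE (by positivity)) hfs (norm_nonneg _)
          positivity
      _ = (C * M) * (t - s) ^ (-γ) := by ring
  refine ⟨h1, ?_, ?_⟩
  all_goals {
    have hUcoeff : ∀ n : ℕ, ⟪(e n : H), ∫ s in Set.Icc (0:ℝ) t, u s⟫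
        = α n ^ γ * ⟪(e n : H), ∫ s in Set.Icc (0:ℝ) t, S (t - s) (f s)⟫ := by
      intro n
      rw [← integral_inner hu_int, ← integral_inner h1, ← MeasureTheory.integral_const_mul]
      refine MeasureTheory.integral_congr_ae ?_
      filter_upwards [hae_lt] with s hs
      rw [hu_coeff s hs n, hScoeff (t - s) (sub_nonneg.mpr hs.2.le) (f s) n, hcdef]
      simp only
      ring
    have hUsq : ∀ n : ℕ, ⟪∫ s in Set.Icc (0:ℝ) t, u s, e n⟫ ^ 2
        = α n ^ (2 * γ) * ⟪∫ s in Set.Icc (0:ℝ) t, S (t - s) (f s), e n⟫ ^ 2 := by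
      intro n
      rw [real_inner_comm, hUcoeff n, mul_pow,
        show (α n ^ γ) ^ 2 = α n ^ (2 * γ) by rw [two_mul, Real.rpow_add (hpos n), sq],
        real_inner_comm]
    first
    | exact ((hasSum_inner_sq e (∫ s in Set.Icc (0:ℝ) t, u s)).summable).congr hUsq
    | {
      calc Real.sqrt (∑' n, α n ^ (2 * γ)
            * ⟪∫ s in Set.Icc (0:ℝ) t, S (t - s) (f s), e n⟫ ^ 2)
          = Real.sqrt (∑' n, ⟪∫ s in Set.Icc (0:ℝ) t, u s, e n⟫ ^ 2) := by
            rw [tsum_congr hUsq]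
        _ = ‖∫ s in Set.Icc (0:ℝ) t, u s‖ := by
            rw [(hasSum_inner_sq e _).tsum_eq]
            exact Real.sqrt_sq (norm_nonneg _)
        _ ≤ ∫ s in Set.Icc (0:ℝ) t, ‖u s‖ :=
            MeasureTheory.norm_integral_le_integral_norm _
        _ ≤ ∫ s in Set.Icc (0:ℝ) t, C * ((t - s) ^ (-γ)
              * Real.exp (-(α 0) * (t - s) / 2) * ‖f s‖) := by
            refine MeasureTheory.integral_mono_of_nonneg
              (Filter.Eventually.of_forall fun s => norm_nonneg _)
              (hφ_int.const_mul C) ?_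
            filter_upwards [hae_lt] with s hs
            calc ‖u s‖ ≤ C * (t - s) ^ (-γ) * Real.exp (-(α 0) * (t - s) / 2) * ‖f s‖ :=
                hu_norm_le s hs
              _ = C * ((t - s) ^ (-γ) * Real.exp (-(α 0) * (t - s) / 2) * ‖f s‖) := by ring
        _ = C * ∫ s in Set.Icc (0:ℝ) t,
              (t - s) ^ (-γ) * Real.exp (-(α 0) * (t - s) / 2) * ‖f s‖ :=
            MeasureTheory.integral_const_mul C _
      }
  }
end

section
/- Let μ be a finite Borel measure on a real separable Hilbert space H₂, let H₁ be a real separable Hilbert space, and let f, g : H₂ → H₁ be strongly measurable with ∫ ‖f(y)‖ ‖g(y)‖ μ(dy) < ∞. Define T : H₁ → H₁ by T h := ∫ ⟨g(y), h⟩ f(y) μ(dy). Then T is a bounded linear operator with ‖T h‖ ≤ (∫ ‖f(y)‖ ‖g(y)‖ μ(dy)) ‖h‖, and for every Hilbert (orthonormal) basis (ε_n)_{n∈ℕ} of H₁ the series ∑_n ⟨T ε_n, ε_n⟩ converges absolutely with ∑_n ⟨T ε_n, ε_n⟩ = ∫ ⟨f(y), g(y)⟩ μ(dy). -/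
open scoped RealInnerProductSpace
open MeasureTheory

section aux

variable {H₁ : Type*} [NormedAddCommGroup H₁] [InnerProductSpace ℝ H₁] [CompleteSpace H₁]

/-- Pointwise Cauchy–Schwarz in ℓ² via finite Bessel. -/
lemma aux_cs_finset (ε : HilbertBasis ℕ ℝ H₁) (x z : H₁) (s : Finset ℕ) :
    ∑ n ∈ s, |⟪x, ε n⟫| * |⟪z, ε n⟫| ≤ ‖x‖ * ‖z‖ := by
  have hx := ε.orthonormal.sum_inner_products_le (s := s) x
  have hz := ε.orthonormal.sum_inner_products_le (s := s) z
  have hcs := Finset.sum_mul_sq_le_sq_mul_sq s (fun n => |⟪x, ε n⟫|) (fun n => |⟪z, ε n⟫|)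
  have hx' : ∑ n ∈ s, |⟪x, ε n⟫| ^ 2 ≤ ‖x‖ ^ 2 := by
    refine le_trans (le_of_eq ?_) hx
    refine Finset.sum_congr rfl fun n _ => ?_
    rw [Real.norm_eq_abs, real_inner_comm]
  have hz' : ∑ n ∈ s, |⟪z, ε n⟫| ^ 2 ≤ ‖z‖ ^ 2 := by
    refine le_trans (le_of_eq ?_) hz
    refine Finset.sum_congr rfl fun n _ => ?_
    rw [Real.norm_eq_abs, real_inner_comm]
  have hsq : (∑ n ∈ s, |⟪x, ε n⟫| * |⟪z, ε n⟫|) ^ 2 ≤ (‖x‖ * ‖z‖) ^ 2 := by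
    have h1 : (0:ℝ) ≤ ∑ n ∈ s, |⟪x, ε n⟫| ^ 2 :=
      Finset.sum_nonneg fun n _ => sq_nonneg _
    have h2 : (0:ℝ) ≤ ∑ n ∈ s, |⟪z, ε n⟫| ^ 2 :=
      Finset.sum_nonneg fun n _ => sq_nonneg _
    nlinarith [norm_nonneg x, norm_nonneg z]
  have hnn : (0:ℝ) ≤ ∑ n ∈ s, |⟪x, ε n⟫| * |⟪z, ε n⟫| :=
    Finset.sum_nonneg fun n _ => mul_nonneg (abs_nonneg _) (abs_nonneg _)
  have := Real.sqrt_le_sqrt hsq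
  rwa [Real.sqrt_sq hnn, Real.sqrt_sq (mul_nonneg (norm_nonneg x) (norm_nonneg z))] at this

lemma aux_cs_summable (ε : HilbertBasis ℕ ℝ H₁) (x z : H₁) :
    Summable (fun n => |⟪x, ε n⟫| * |⟪z, ε n⟫|) :=
  summable_of_sum_le (fun n => mul_nonneg (abs_nonneg _) (abs_nonneg _))
    (fun s => aux_cs_finset ε x z s)

lemma aux_cs_tsum (ε : HilbertBasis ℕ ℝ H₁) (x z : H₁) :
    (∑' n, |⟪x, ε n⟫| * |⟪z, ε n⟫|) ≤ ‖x‖ * ‖z‖ :=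
  Summable.tsum_le_of_sum_le (aux_cs_summable ε x z) (fun s => aux_cs_finset ε x z s)

end aux

/-- Let `μ` be a finite Borel measure on a real separable
Hilbert space `H₂`, let `H₁` be a real separable Hilbert space, and let
`f, g : H₂ → H₁` be strongly measurable with `∫ ‖f(y)‖ ‖g(y)‖ μ(dy) < ∞`.
Define `T : H₁ → H₁` by `T h := ∫ ⟨g(y), h⟩ f(y) μ(dy)`.  Then `T` is a
bounded linear operator with `‖T h‖ ≤ (∫ ‖f(y)‖ ‖g(y)‖ μ(dy)) ‖h‖`, and for
every Hilbert (orthonormal) basis `(ε_n)` of `H₁` the series `∑_n ⟨T ε_n, ε_n⟩`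
converges absolutely with `∑_n ⟨T ε_n, ε_n⟩ = ∫ ⟨f(y), g(y)⟩ μ(dy)`. -/
theorem stmt14 {H₁ H₂ : Type*}
    [NormedAddCommGroup H₁] [InnerProductSpace ℝ H₁] [CompleteSpace H₁]
    [TopologicalSpace.SeparableSpace H₁]
    [NormedAddCommGroup H₂] [InnerProductSpace ℝ H₂] [CompleteSpace H₂]
    [TopologicalSpace.SeparableSpace H₂]
    [MeasurableSpace H₂] [BorelSpace H₂]
    (μ : Measure H₂) [IsFiniteMeasure μ]
    (f g : H₂ → H₁) (hf : StronglyMeasurable f) (hg : StronglyMeasurable g)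
    (hfg : Integrable (fun y => ‖f y‖ * ‖g y‖) μ) :
    (∀ h₁ h₂ : H₁,
      (∫ y, ⟪g y, h₁ + h₂⟫ • f y ∂μ)
        = (∫ y, ⟪g y, h₁⟫ • f y ∂μ) + ∫ y, ⟪g y, h₂⟫ • f y ∂μ) ∧
    (∀ (c : ℝ) (h : H₁),
      (∫ y, ⟪g y, c • h⟫ • f y ∂μ) = c • ∫ y, ⟪g y, h⟫ • f y ∂μ) ∧
    (∀ h : H₁,
      ‖∫ y, ⟪g y, h⟫ • f y ∂μ‖ ≤ (∫ y, ‖f y‖ * ‖g y‖ ∂μ) * ‖h‖) ∧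
    (∀ ε : HilbertBasis ℕ ℝ H₁,
      Summable (fun n => |⟪∫ y, ⟪g y, ε n⟫ • f y ∂μ, (ε n : H₁)⟫|) ∧
      (∑' n, ⟪∫ y, ⟪g y, ε n⟫ • f y ∂μ, (ε n : H₁)⟫)
        = ∫ y, ⟪f y, g y⟫ ∂μ) := by
  -- key integrability
  have key : ∀ h : H₁, Integrable (fun y => ⟪g y, h⟫ • f y) μ := by
    intro h
    refine Integrable.mono' (hfg.mul_const ‖h‖) ?_ ?_
    · exact ((hg.inner stronglyMeasurable_const).smul hf).aestronglyMeasurable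
    · refine Filter.Eventually.of_forall fun y => ?_
      rw [norm_smul, Real.norm_eq_abs]
      calc |⟪g y, h⟫| * ‖f y‖ ≤ (‖g y‖ * ‖h‖) * ‖f y‖ := by
            gcongr; exact abs_real_inner_le_norm _ _
        _ = ‖f y‖ * ‖g y‖ * ‖h‖ := by ring
  refine ⟨?_, ?_, ?_, ?_⟩
  · intro h₁ h₂
    simp_rw [inner_add_right, add_smul]
    exact integral_add (key h₁) (key h₂)
  · intro c h
    simp_rw [real_inner_smul_right, mul_smul]
    exact integral_smul c _
  · intro h
    calc ‖∫ y, ⟪g y, h⟫ • f y ∂μ‖ ≤ ∫ y, ‖⟪g y, h⟫ • f y‖ ∂μ :=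
          norm_integral_le_integral_norm _
      _ ≤ ∫ y, (‖f y‖ * ‖g y‖) * ‖h‖ ∂μ := by
          refine integral_mono (key h).norm (hfg.mul_const ‖h‖) fun y => ?_
          rw [norm_smul, Real.norm_eq_abs]
          calc |⟪g y, h⟫| * ‖f y‖ ≤ (‖g y‖ * ‖h‖) * ‖f y‖ := by
                gcongr; exact abs_real_inner_le_norm _ _
            _ = ‖f y‖ * ‖g y‖ * ‖h‖ := by ring
      _ = (∫ y, ‖f y‖ * ‖g y‖ ∂μ) * ‖h‖ := integral_mul_const _ _
  · intro ε
    -- scalar integrands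
    set F : ℕ → H₂ → ℝ := fun n y => ⟪g y, ε n⟫ * ⟪f y, ε n⟫ with hF_def
    have hFm : ∀ n, AEStronglyMeasurable (F n) μ := fun n =>
      ((hg.inner stronglyMeasurable_const).mul
        (hf.inner stronglyMeasurable_const)).aestronglyMeasurable
    have hFabs : ∀ n y, |F n y| = |⟪f y, ε n⟫| * |⟪g y, ε n⟫| := by
      intro n y; rw [hF_def]; simp [abs_mul, mul_comm]
    have hFle : ∀ y, (∑' n, |F n y|) ≤ ‖f y‖ * ‖g y‖ := by
      intro y
      calc (∑' n, |F n y|) = ∑' n, |⟪f y, ε n⟫| * |⟪g y, ε n⟫| := by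
            simp_rw [hFabs]
        _ ≤ ‖f y‖ * ‖g y‖ := aux_cs_tsum ε (f y) (g y)
    have hFsummable : ∀ y, Summable (fun n => |F n y|) := by
      intro y
      have := aux_cs_summable ε (f y) (g y)
      simpa [hFabs] using this
    -- the key inner product identity
    have hTn : ∀ n, ⟪∫ y, ⟪g y, ε n⟫ • f y ∂μ, (ε n : H₁)⟫ = ∫ y, F n y ∂μ := by
      intro n
      rw [real_inner_comm, ← integral_inner (key (ε n)) (ε n)]
      refine integral_congr_ae (Filter.Eventually.of_forall fun y => ?_)
      show ⟪(ε n : H₁), ⟪g y, ε n⟫ • f y⟫ = F n y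
      rw [real_inner_smul_right, hF_def]
      congr 1 <;> exact real_inner_comm _ _
    -- each F n integrable
    have hFint : ∀ n, Integrable (F n) μ := by
      intro n
      refine Integrable.mono' hfg (hFm n) (Filter.Eventually.of_forall fun y => ?_)
      rw [Real.norm_eq_abs, hFabs n y]
      have h1 : |⟪f y, ε n⟫| ≤ ‖f y‖ := by
        have := abs_real_inner_le_norm (f y) (ε n)
        simpa [ε.orthonormal.1 n] using this
      have h2 : |⟪g y, ε n⟫| ≤ ‖g y‖ := by
        have := abs_real_inner_le_norm (g y) (ε n)
        simpa [ε.orthonormal.1 n] using this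
      exact mul_le_mul h1 h2 (abs_nonneg _) (norm_nonneg _)
    -- the ENNReal bound for integral_tsum
    have hlin : ∑' n, ∫⁻ y, ‖F n y‖₊ ∂μ ≠ ⊤ := by
      have h1 : ∑' n, ∫⁻ y, ‖F n y‖₊ ∂μ = ∫⁻ y, ∑' n, (‖F n y‖₊ : ENNReal) ∂μ :=
        (lintegral_tsum fun n => (hFm n).aemeasurable.nnnorm.coe_nnreal_ennreal).symm
      have h2 : ∀ y, (∑' n, (‖F n y‖₊ : ENNReal)) ≤ ENNReal.ofReal (‖f y‖ * ‖g y‖) := by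
        intro y
        have := ENNReal.ofReal_tsum_of_nonneg (fun n => abs_nonneg (F n y)) (hFsummable y)
        calc (∑' n, (‖F n y‖₊ : ENNReal)) = ∑' n, ENNReal.ofReal |F n y| := by
              simp_rw [← ENNReal.ofReal_coe_nnreal, coe_nnnorm, Real.norm_eq_abs]
          _ = ENNReal.ofReal (∑' n, |F n y|) := this.symm
          _ ≤ ENNReal.ofReal (‖f y‖ * ‖g y‖) := ENNReal.ofReal_le_ofReal (hFle y)
      rw [h1]
      refine ne_of_lt (lt_of_le_of_lt (lintegral_mono fun y => h2 y) ?_)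
      have := hfg.2
      rw [hasFiniteIntegral_iff_norm] at this
      refine lt_of_le_of_lt (lintegral_mono fun y => ?_) this
      exact ENNReal.ofReal_le_ofReal (le_abs_self _)
    constructor
    · -- summability of absolute values
      have hint_abs : ∀ n, Integrable (fun y => |F n y|) μ := fun n => (hFint n).abs
      have hsum_int : Summable (fun n => ∫ y, |F n y| ∂μ) := by
        refine summable_of_sum_le (c := ∫ y, ‖f y‖ * ‖g y‖ ∂μ) (fun n => integral_nonneg fun y => abs_nonneg _) ?_
        intro s
        rw [← integral_finset_sum s fun n _ => hint_abs n]
        refine integral_mono (integrable_finset_sum s fun n _ => hint_abs n) hfg fun y => ?_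
        calc ∑ n ∈ s, |F n y| ≤ ∑' n, |F n y| :=
              Summable.sum_le_tsum s (fun n _ => abs_nonneg _) (hFsummable y)
          _ ≤ ‖f y‖ * ‖g y‖ := hFle y
      refine Summable.of_nonneg_of_le (fun n => abs_nonneg _) (fun n => ?_) hsum_int
      rw [hTn n]
      simpa [Real.norm_eq_abs] using norm_integral_le_integral_norm (μ := μ) (fun y => F n y)
    · -- the trace identity
      have hswap : ∫ y, (∑' n, F n y) ∂μ = ∑' n, ∫ y, F n y ∂μ :=
        integral_tsum hFm hlin
      have hpt : ∀ y, (∑' n, F n y) = ⟪f y, g y⟫ := by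
        intro y
        have := ε.tsum_inner_mul_inner (f y) (g y)
        rw [← this]
        refine tsum_congr fun n => ?_
        show F n y = ⟪f y, ε n⟫ * ⟪(ε n : H₁), g y⟫
        rw [hF_def]
        show ⟪g y, ε n⟫ * ⟪f y, ε n⟫ = _
        rw [mul_comm]
        congr 1
        exact real_inner_comm _ _
      calc (∑' n, ⟪∫ y, ⟪g y, ε n⟫ • f y ∂μ, (ε n : H₁)⟫)
            = ∑' n, ∫ y, F n y ∂μ := tsum_congr fun n => hTn n
        _ = ∫ y, (∑' n, F n y) ∂μ := hswap.symm
        _ = ∫ y, ⟪f y, g y⟫ ∂μ := integral_congr_ae (Filter.Eventually.of_forall hpt)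
end
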